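/- arXiv:2501.05193 — 2 statements merged into one kernel-verified Lean document; each statement's English description precedes it below -/
import Mathlib

section
/- Let H be a real Hilbert space with inner product (·,·), a : H × H → ℝ a symmetric coercive bounded bilinear form, and let Π : H → H be an orthogonal projection (with respect to (·,·)). Suppose u₁, u₂ ∈ H satisfy a(u₁, v) = (f, v) and a(u₂, v) = (Πf, v) for all v ∈ H, where f ∈ H. If moreover ‖v − Πv‖ ≤ C_Π ‖v‖_a for all v ∈ H (with ‖·‖_a the energy norm), then ‖u₁ − u₂‖_a ≤ C_Π ‖f − Πf‖. -/
/-! Testing the equation of `u₁ - u₂` with `e = u₁ - u₂` itself gives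
`‖e‖_a² = (f - Πf, e)`. Since `f - Πf` is orthogonal to the range of `Π`, the test function `e`
may be replaced by `e - Πe`, which the approximation estimate bounds by `C_Π ‖e‖_a`;
dividing by `‖e‖_a` finishes the proof. -/

open scoped InnerProductSpace

theorem Real.sqrt_le_of_le_mul_sqrt {x c : ℝ} (hc : 0 ≤ c) (h : x ≤ c * √x) : √x ≤ c := by
  rcases le_or_gt x 0 with hx | hx
  · rwa [Real.sqrt_eq_zero'.mpr hx]
  · have hsq : √x * √x ≤ c * √x := by rwa [Real.mul_self_sqrt hx.le]
    exact le_of_mul_le_mul_right hsq (Real.sqrt_pos.mpr hx)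

section Projection

variable {𝕜 E : Type*} [RCLike 𝕜] [NormedAddCommGroup E] [InnerProductSpace 𝕜 E]

theorem LinearMap.IsSymmetric.inner_sub_map_self_map_eq_zero {P : E →ₗ[𝕜] E} (hP : P.IsSymmetric)
    (hidem : ∀ v, P (P v) = P v) (v w : E) : ⟪v - P v, P w⟫_𝕜 = 0 := by
  rw [← hP, map_sub, hidem, sub_self, inner_zero_left]

theorem LinearMap.IsSymmetric.inner_sub_map_self_eq_sub_map {P : E →ₗ[𝕜] E} (hP : P.IsSymmetric)
    (hidem : ∀ v, P (P v) = P v) (v w : E) : ⟪v - P v, w⟫_𝕜 = ⟪v - P v, w - P w⟫_𝕜 := by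
  rw [inner_sub_right, hP.inner_sub_map_self_map_eq_zero hidem, sub_zero]

end Projection

theorem sub_left_of_symm_of_add_right {E : Type*} [AddCommGroup E] {a : E → E → ℝ}
    (hsymm : ∀ u v, a u v = a v u) (hadd : ∀ u v w, a u (v + w) = a u v + a u w) (u₁ u₂ v : E) :
    a (u₁ - u₂) v = a u₁ v - a u₂ v := by
  rw [hsymm, hsymm u₁, hsymm u₂]
  exact (AddMonoidHom.mk' (a v) (hadd v)).map_sub u₁ u₂

theorem energy_error_projection_data_general
    {H : Type*} [NormedAddCommGroup H] [InnerProductSpace ℝ H]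
    (a : H → H → ℝ)
    (hsymm : ∀ u v, a u v = a v u)
    (hadd : ∀ u v w, a u (v + w) = a u v + a u w)
    (P : H →ₗ[ℝ] H)
    (hidem : ∀ v, P (P v) = P v)
    (hselfadj : ∀ u v, (inner ℝ (P u) v : ℝ) = inner ℝ u (P v))
    (CPi : ℝ) (hC : 0 < CPi)
    (happrox : ∀ v, ‖v - P v‖ ≤ CPi * Real.sqrt (a v v))
    (f u₁ u₂ : H)
    (hu₁ : ∀ v, a u₁ v = inner ℝ f v)
    (hu₂ : ∀ v, a u₂ v = inner ℝ (P f) v) :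
    Real.sqrt (a (u₁ - u₂) (u₁ - u₂)) ≤ CPi * ‖f - P f‖ := by
  set e := u₁ - u₂
  have henergy : a e e = ⟪f - P f, e - P e⟫_ℝ := by
    rw [sub_left_of_symm_of_add_right hsymm hadd, hu₁, hu₂, ← inner_sub_left,
      LinearMap.IsSymmetric.inner_sub_map_self_eq_sub_map hselfadj hidem]
  refine Real.sqrt_le_of_le_mul_sqrt (by positivity) ?_
  calc a e e = ⟪f - P f, e - P e⟫_ℝ := henergy
    _ ≤ ‖f - P f‖ * ‖e - P e‖ := real_inner_le_norm _ _
    _ ≤ ‖f - P f‖ * (CPi * √(a e e)) := by gcongr; exact happrox e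
    _ = CPi * ‖f - P f‖ * √(a e e) := by ring

/-- If u₁, u₂ solve the variational problems with data f and Πf respectively, where Π is an
orthogonal projection satisfying the approximation estimate ‖v − Πv‖ ≤ CPi ‖v‖_a, then
‖u₁ − u₂‖_a ≤ CPi ‖f − Πf‖. -/
theorem energy_error_projection_data
    {H : Type*} [NormedAddCommGroup H] [InnerProductSpace ℝ H] [CompleteSpace H]
    (a : H → H → ℝ)
    (hsymm : ∀ u v, a u v = a v u)
    (hadd : ∀ u v w, a u (v + w) = a u v + a u w)
    (hsmul : ∀ (c : ℝ) u v, a u (c • v) = c * a u v)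
    (M : ℝ) (hbound : ∀ u v, |a u v| ≤ M * ‖u‖ * ‖v‖)
    (α : ℝ) (hα : 0 < α) (hcoer : ∀ v, α * ‖v‖ ^ 2 ≤ a v v)
    (P : H →ₗ[ℝ] H)
    (hidem : ∀ v, P (P v) = P v)
    (hselfadj : ∀ u v, (inner ℝ (P u) v : ℝ) = inner ℝ u (P v))
    (CPi : ℝ) (hC : 0 < CPi)
    (happrox : ∀ v, ‖v - P v‖ ≤ CPi * Real.sqrt (a v v))
    (f u₁ u₂ : H)
    (hu₁ : ∀ v, a u₁ v = inner ℝ f v)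
    (hu₂ : ∀ v, a u₂ v = inner ℝ (P f) v) :
    Real.sqrt (a (u₁ - u₂) (u₁ - u₂)) ≤ CPi * ‖f - P f‖ :=
  energy_error_projection_data_general a hsymm hadd P hidem hselfadj CPi hC happrox f u₁ u₂ hu₁ hu₂
end

section
/- Let H be a real Hilbert space, a : H × H → ℝ symmetric, bounded, and coercive with coercivity constant α w.r.t. a norm ‖·‖, and suppose the Poincaré-type bound ‖v‖_{L²} ≤ C_P ‖v‖_a holds for all v in a subspace V, where ‖·‖_a is the energy norm and ‖·‖_{L²} another norm on V. Let φ₁,…,φ_n ∈ V with ‖φᵢ‖_a ≤ 1 for all i, and suppose there is a linear map Π : V → ℝⁿ-coefficient space such that ‖∑ᵢ cᵢ Πφᵢ‖²_{L²} ≥ γ ∑ᵢ cᵢ² for all c ∈ ℝⁿ and ‖Πv‖_{L²} ≤ ‖v‖_{L²}. Then the stiffness matrix Â with Âᵢⱼ = a(φᵢ,φⱼ) satisfies λ_min(Â) ≥ γ / C_P². -/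
/-- Lower eigenvalue bound for the SLOD stiffness matrix: with a Poincaré bound
‖v‖ ≤ C_P‖v‖_a, a norm non-increasing projection P, and a Riesz lower bound γ for the
projected basis, the stiffness matrix Âᵢⱼ = a(φᵢ,φⱼ) satisfies λ_min(Â) ≥ γ/C_P². -/
theorem stiffness_matrix_lambda_min_bound
    {H : Type*} [NormedAddCommGroup H] [InnerProductSpace ℝ H]
    (a : H → H → ℝ)
    (hsymm : ∀ u v, a u v = a v u)
    (hadd : ∀ u v w, a u (v + w) = a u v + a u w)
    (hsmul : ∀ (c : ℝ) u v, a u (c • v) = c * a u v)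
    (M : ℝ) (hbound : ∀ u v, |a u v| ≤ M * ‖u‖ * ‖v‖)
    (α : ℝ) (hα : 0 < α) (hcoer : ∀ v, α * ‖v‖ ^ 2 ≤ a v v)
    (CP : ℝ) (hCP : 0 < CP)
    (hPoincare : ∀ v, ‖v‖ ≤ CP * Real.sqrt (a v v))
    (P : H →ₗ[ℝ] H) (hPnorm : ∀ v, ‖P v‖ ≤ ‖v‖)
    {n : ℕ} [NeZero n] (φ : Fin n → H)
    (hφnorm : ∀ i, Real.sqrt (a (φ i) (φ i)) ≤ 1)
    (γ : ℝ) (hγ : 0 < γ)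
    (hRiesz : ∀ c : Fin n → ℝ, γ * ∑ i, (c i) ^ 2 ≤ ‖∑ i, c i • P (φ i)‖ ^ 2)
    (Ahat : Matrix (Fin n) (Fin n) ℝ) (hAhat : ∀ i j, Ahat i j = a (φ i) (φ j))
    (hHerm : Ahat.IsHermitian) :
    γ / CP ^ 2 ≤ ⨅ i, hHerm.eigenvalues i := by
  -- derived bilinearity facts
  have hzero : ∀ u, a u 0 = 0 := by
    intro u
    have := hsmul 0 u 0
    simpa using this
  have hsum : ∀ (u : H) (f : Fin n → H), a u (∑ j, f j) = ∑ j, a u (f j) := by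
    intro u f
    classical
    induction (Finset.univ : Finset (Fin n)) using Finset.induction with
    | empty => simpa using hzero u
    | insert x s hx ih => rw [Finset.sum_insert hx, hadd, ih, Finset.sum_insert hx]
  -- quadratic form expansion
  have hquad : ∀ c : Fin n → ℝ,
      a (∑ i, c i • φ i) (∑ j, c j • φ j) = ∑ i, ∑ j, c i * c j * a (φ i) (φ j) := by
    intro c
    rw [hsum]
    refine Finset.sum_congr rfl fun j _ => ?_
    rw [hsmul, hsymm, hsum]
    rw [Finset.mul_sum]
    refine Finset.sum_congr rfl fun i _ => ?_
    rw [hsmul, hsymm]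
    ring
  apply le_ciInf
  intro i
  set c : Fin n → ℝ := fun j => hHerm.eigenvectorBasis i j with hc
  set v : H := ∑ j, c j • φ j with hv
  have hav_nonneg : 0 ≤ a v v :=
    le_trans (by positivity) (hcoer v)
  -- norm of eigenvector is 1
  have hnorm1 : ∑ j, c j ^ 2 = 1 := by
    have ho := hHerm.eigenvectorBasis.orthonormal.1 i
    have : ‖hHerm.eigenvectorBasis i‖ ^ 2 = 1 := by
      rw [ho]; norm_num
    rw [EuclideanSpace.norm_eq] at this
    rw [Real.sq_sqrt (by positivity)] at this
    simpa [hc, sq_abs, pow_two] using this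
  -- eigenvector equation
  have heig : ∀ j, (Ahat.mulVec c) j = hHerm.eigenvalues i * c j := by
    intro j
    have := hHerm.mulVec_eigenvectorBasis i
    have := congrFun this j
    simpa [hc] using this
  -- quadratic form equals eigenvalue
  have hq : a v v = hHerm.eigenvalues i := by
    rw [hv, hquad]
    have : ∀ k, ∑ j, c k * c j * a (φ k) (φ j) = c k * (Ahat.mulVec c) k := by
      intro k
      rw [Matrix.mulVec, dotProduct, Finset.mul_sum]
      exact Finset.sum_congr rfl fun j _ => by rw [hAhat]; ring
    rw [Finset.sum_congr rfl fun k _ => this k]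
    calc ∑ k, c k * (Ahat.mulVec c) k
        = ∑ k, hHerm.eigenvalues i * c k ^ 2 := by
          refine Finset.sum_congr rfl fun k _ => ?_
          rw [heig k]; ring
      _ = hHerm.eigenvalues i := by rw [← Finset.mul_sum, hnorm1, mul_one]
  -- chain of inequalities
  have hPv : (∑ j, c j • P (φ j)) = P v := by
    rw [hv, map_sum]
    exact Finset.sum_congr rfl fun j _ => (P.map_smul _ _).symm
  have h1 : γ ≤ ‖P v‖ ^ 2 := by
    have := hRiesz c
    rw [hnorm1, mul_one, hPv] at this
    exact this
  have h2 : ‖P v‖ ^ 2 ≤ ‖v‖ ^ 2 := by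
    have := hPnorm v
    exact pow_le_pow_left₀ (norm_nonneg _) this 2
  have h3 : ‖v‖ ^ 2 ≤ CP ^ 2 * a v v := by
    have := hPoincare v
    calc ‖v‖ ^ 2 ≤ (CP * Real.sqrt (a v v)) ^ 2 :=
          pow_le_pow_left₀ (norm_nonneg _) this 2
      _ = CP ^ 2 * a v v := by
          rw [mul_pow, Real.sq_sqrt hav_nonneg]
  have : γ ≤ CP ^ 2 * hHerm.eigenvalues i := by
    rw [← hq]
    exact h1.trans (h2.trans h3)
  rw [div_le_iff₀ (by positivity)]
  linarith [this]
end
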